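/- arXiv:math/9903079 — 2 statements merged into one kernel-verified Lean document; each statement's English description precedes it below -/
import Mathlib

section
/- Let (Γ₁, Γ₂, τ) be a Belavin–Drinfeld triple with Γ₁ ∩ Γ₂ = ∅, J = 1 + (q−q⁻¹)Σ_{α∈Γ̃₁} sign(α,τα) q^{K_{α,τα}} e_{τα}⊗e_{−α}, and for α ∈ Γ̃₁ with β = τα let B_{α,β} denote the coefficient of e_β⊗e_{−α} in J⁻¹ − 1. Define L_{α,β} = ½ if α ⋖ β, −½ if α ⋗ β, and 0 otherwise. Then: (i) if α ≺→ β, B_{α,β} = −(q−q⁻¹)q^{K_{α,β}}; (ii) if α ≺← β, B_{α,β} = −sign(α,β)(q−q⁻¹)q^{|α|−1+L_{α,β}}. -/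
namespace GGS

open Finset
open scoped Classical

noncomputable section

/-- `n × n` complex matrices, `Mat_n(ℂ)`. -/
abbrev MatN (n : ℕ) := Matrix (Fin n) (Fin n) ℂ
/-- `Mat_n(ℂ) ⊗ Mat_n(ℂ)`, realized as matrices indexed by pairs. -/
abbrev MatT (n : ℕ) := Matrix (Fin n × Fin n) (Fin n × Fin n) ℂ
/-- `Mat_n(ℂ)^{⊗3}`. -/
abbrev MatT3 (n : ℕ) := Matrix (Fin n × Fin n × Fin n) (Fin n × Fin n × Fin n) ℂ

/-- Matrix unit `E_{ij}` (ℕ-indices; `0` if out of range). -/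
def E (n i j : ℕ) : MatN n := fun a b => if (a : ℕ) = i ∧ (b : ℕ) = j then 1 else 0

/-- Tensor (Kronecker) product of two `n × n` matrices. -/
def tens {n : ℕ} (A B : MatN n) : MatT n := fun p q => A p.1 q.1 * B p.2 q.2

/-- `M₂₁` : swap of the two tensor factors. -/
def swap21 {n : ℕ} (M : MatT n) : MatT n := fun p q => M (p.2, p.1) (q.2, q.1)

/-- The permutation (Casimir) element `P = Σ E_{ij} ⊗ E_{ji}`. -/
def Pm (n : ℕ) : MatT n := ∑ i ∈ range n, ∑ j ∈ range n, tens (E n i j) (E n j i)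

/-- `P⁰ = Σ E_{ii} ⊗ E_{ii}`. -/
def P0 (n : ℕ) : MatT n := ∑ i ∈ range n, tens (E n i i) (E n i i)

/-- `M₁₂ = M ⊗ 1`. -/
def lift12 {n : ℕ} (M : MatT n) : MatT3 n :=
  fun p q => M (p.1, p.2.1) (q.1, q.2.1) * (if p.2.2 = q.2.2 then 1 else 0)

/-- `M₁₃`. -/
def lift13 {n : ℕ} (M : MatT n) : MatT3 n :=
  fun p q => M (p.1, p.2.2) (q.1, q.2.2) * (if p.2.1 = q.2.1 then 1 else 0)

/-- `M₂₃ = 1 ⊗ M`. -/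
def lift23 {n : ℕ} (M : MatT n) : MatT3 n :=
  fun p q => M (p.2.1, p.2.2) (q.2.1, q.2.2) * (if p.1 = q.1 then 1 else 0)

/-- The quantum Yang–Baxter equation `R₁₂R₁₃R₂₃ = R₂₃R₁₃R₁₂`. -/
def QYBE {n : ℕ} (M : MatT n) : Prop :=
  lift12 M * lift13 M * lift23 M = lift23 M * lift13 M * lift12 M

/-- The Hecke relation `(PR − q)(PR + q⁻¹) = 0`. -/
def Hecke {n : ℕ} (q : ℝ) (M : MatT n) : Prop :=
  (Pm n * M - (q : ℂ) • (1 : MatT n)) * (Pm n * M + (q : ℂ)⁻¹ • (1 : MatT n)) = 0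

/-- Standard basis vector `e_i` of `ℂⁿ` (as a function on indices). -/
def evec (i : ℕ) : ℕ → ℂ := fun k => if k = i then 1 else 0
/-- The root vector `e_i − e_j`. -/
def rvec (i j : ℕ) : ℕ → ℂ := evec i - evec j
/-- The simple root `α_i = e_i − e_{i+1}` (0-based indexing). -/
def svec (i : ℕ) : ℕ → ℂ := rvec i (i + 1)
/-- The inner product on `ℂⁿ` for which `(e_i)` is orthonormal (restricted to real vectors). -/
def ipn (n : ℕ) (x y : ℕ → ℂ) : ℂ := ∑ k ∈ range n, x k * y k

/-- A Belavin–Drinfeld triple of type `A_{n−1}`; simple roots are indexed `0,…,n−2`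
(0-based: index `i` stands for `α_i = e_i − e_{i+1}`). -/
structure BDTriple (n : ℕ) where
  Γ1 : Finset ℕ
  Γ2 : Finset ℕ
  τ : ℕ → ℕ
  mem1 : ∀ i ∈ Γ1, i + 1 < n
  mem2 : ∀ i ∈ Γ2, i + 1 < n
  bij : Set.BijOn τ ↑Γ1 ↑Γ2
  isometry : ∀ i ∈ Γ1, ∀ j ∈ Γ1, ipn n (svec (τ i)) (svec (τ j)) = ipn n (svec i) (svec j)
  nilp : ∀ i ∈ Γ1, ∃ k ≥ 1, τ^[k] i ∉ Γ1

variable {n : ℕ}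

/-- The positive root `e_i − e_j` (`i < j`) lies in `Γ̃₁` (the positive part of `Span Γ₁`). -/
def SpanRoot (T : BDTriple n) (i j : ℕ) : Prop :=
  i < j ∧ ∀ k, i ≤ k → k < j → k ∈ T.Γ1

/-- `q = τ(p)` for positive roots, via the additive extension of `τ` to `Γ̃₁`. -/
def tauStep (T : BDTriple n) (p q : ℕ × ℕ) : Prop :=
  SpanRoot T p.1 p.2 ∧ q.1 < q.2 ∧ rvec q.1 q.2 = ∑ k ∈ Finset.Ico p.1 p.2, svec (T.τ k)

/-- `q = τᵏ(p)`. -/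
def precK (T : BDTriple n) : ℕ → ℕ × ℕ → ℕ × ℕ → Prop
  | 0, p, q => p = q
  | k + 1, p, q => ∃ r, tauStep T p r ∧ precK T k r q

/-- `p ≺ q`, i.e. `q = τᵏ p` for some `k ≥ 1`. -/
def prec (T : BDTriple n) (p q : ℕ × ℕ) : Prop := ∃ k, precK T (k + 1) p q

/-- `p ≺← q` : `q = τᵏ p` and `τᵏ` reverses orientation on `p`. -/
def RevOri (T : BDTriple n) (p q : ℕ × ℕ) : Prop :=
  ∃ k, precK T (k + 1) p q ∧ T.τ^[k + 1] p.1 = q.2 - 1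

/-- `p ≺→ q` : `q = τᵏ p` and `τᵏ` preserves orientation on `p`. -/
def PresOri (T : BDTriple n) (p q : ℕ × ℕ) : Prop :=
  ∃ k, precK T (k + 1) p q ∧ T.τ^[k + 1] p.1 = q.1

/-- `sign(α,β)` : `(−1)^{1−|α|}` in the orientation-reversing case, `1` otherwise. -/
def sgn (T : BDTriple n) (p q : ℕ × ℕ) : ℂ :=
  if RevOri T p q then (-1 : ℂ) ^ (p.2 - p.1 - 1) else 1

/-- Sum over all pairs of (would-be) positive roots with indices `< n`. -/
def sumRoots (n : ℕ) (f : ℕ × ℕ → ℕ × ℕ → MatT n) : MatT n :=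
  ∑ i ∈ range n, ∑ j ∈ range n, ∑ k ∈ range n, ∑ l ∈ range n, f (i, j) (k, l)

/-- `a = Σ_{α≺β} sign(α,β) (e_{−α} ⊗ e_β − e_β ⊗ e_{−α})`. -/
def aMat (T : BDTriple n) : MatT n :=
  sumRoots n fun p q =>
    if prec T p q then
      sgn T p q • (tens (E n p.2 p.1) (E n q.1 q.2) - tens (E n q.1 q.2) (E n p.2 p.1))
    else 0

/-- `r_s = ½ P⁰ + Σ_{α>0} e_{−α} ⊗ e_α`. -/
def rsMat (n : ℕ) : MatT n :=
  (1 / 2 : ℂ) • P0 n +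
    ∑ i ∈ range n, ∑ j ∈ range n, if i < j then tens (E n j i) (E n i j) else 0

/-- `ε = a r_s + r_s a + a²`. -/
def epsMat (T : BDTriple n) : MatT n :=
  aMat T * rsMat n + rsMat n * aMat T + aMat T * aMat T

/-- Entry of a tensor-square matrix, with ℕ indices. -/
def entry (M : MatT n) (a b c d : ℕ) : ℂ :=
  if h : a < n ∧ b < n ∧ c < n ∧ d < n then
    M (⟨a, h.1⟩, ⟨b, h.2.1⟩) (⟨c, h.2.2.1⟩, ⟨d, h.2.2.2⟩)
  else 0

/-- The coefficient of `e_β ⊗ e_{−α}` in `M` (here `p = α`, `q = β`). -/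
def coeffBA (M : MatT n) (p q : ℕ × ℕ) : ℂ := entry M q.1 p.2 q.2 p.1

/-- `q^z = exp(z · ln q)`. -/
def qpow (q : ℝ) (z : ℂ) : ℂ := Complex.exp (z * (Real.log q : ℂ))

/-- The coefficients `K_{α,β}`. -/
def Kc (T : BDTriple n) (p q : ℕ × ℕ) : ℂ :=
  (if p.2 = q.1 then (1 / 2 : ℂ) else 0) - (if q.2 = p.1 then (1 / 2 : ℂ) else 0)
    + (if ∃ g : ℕ × ℕ, prec T p g ∧ prec T g q ∧ p.2 = g.1 then 1 else 0)
    - (if ∃ g : ℕ × ℕ, prec T p g ∧ prec T g q ∧ g.2 = p.1 then 1 else 0)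
    + (if RevOri T p q then 1 - ((p.2 - p.1 : ℕ) : ℂ) else 0)

/-- `Jⁱ = 1 + (q − q⁻¹) Σ_{β = τⁱα} sign(α,β) q^{K_{α,β}} e_β ⊗ e_{−α}`. -/
def Jlevel (q : ℝ) (T : BDTriple n) (i : ℕ) : MatT n :=
  1 + sumRoots n fun p r =>
    if precK T i p r then
      (((q : ℂ) - (q : ℂ)⁻¹) * sgn T p r * qpow q (Kc T p r)) • tens (E n r.1 r.2) (E n p.2 p.1)
    else 0

/-- `J = J¹ J² ⋯` (levels beyond the maximal power of `τ` contribute the identity). -/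
def Jmat (q : ℝ) (T : BDTriple n) : MatT n :=
  ((List.range n).map fun i => Jlevel q T (i + 1)).prod

/-- The standard Drinfeld–Jimbo `R`-matrix `R_s`. -/
def RsQ (n : ℕ) (q : ℝ) : MatT n :=
  (q : ℂ) • P0 n
    + (∑ i ∈ range n, ∑ j ∈ range n, if i ≠ j then tens (E n i i) (E n j j) else 0)
    + ((q : ℂ) - (q : ℂ)⁻¹) •
        (∑ i ∈ range n, ∑ j ∈ range n, if j < i then tens (E n i j) (E n j i) else 0)

/-- `e_{−α} ∧_c e_β = q^{−c} e_{−α} ⊗ e_β − q^c e_β ⊗ e_{−α}` (`p = α`, `r = β`). -/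
def wedgeC {n : ℕ} (q : ℝ) (c : ℂ) (p r : ℕ × ℕ) : MatT n :=
  qpow q (-c) • tens (E n p.2 p.1) (E n r.1 r.2) - qpow q c • tens (E n r.1 r.2) (E n p.2 p.1)

/-- `R̄_GGS = R_s + (q−q⁻¹) Σ_{α≺β} sign(α,β) e_{−α} ∧_{−sign(α,β) ε_{α,β}} e_β`. -/
def RbarGGS (q : ℝ) (T : BDTriple n) : MatT n :=
  RsQ n q + ((q : ℂ) - (q : ℂ)⁻¹) •
    sumRoots n fun p r =>
      if prec T p r then
        sgn T p r • wedgeC q (-(sgn T p r) * coeffBA (epsMat T) p r) p r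
      else 0

/-- `R̄_J = J⁻¹ R_s J₂₁`. -/
def RbarJ (q : ℝ) (T : BDTriple n) : MatT n :=
  (Jmat q T)⁻¹ * RsQ n q * swap21 (Jmat q T)

/-- `q^{r⁰}` for a diagonal⊗diagonal `r⁰`. -/
def qr0 (n : ℕ) (q : ℝ) (r0 : ℕ → ℕ → ℂ) : MatT n :=
  ∑ i ∈ range n, ∑ j ∈ range n, qpow q (r0 i j) • tens (E n i i) (E n j j)

/-- `R_GGS = q^{r⁰} R̄_GGS q^{r⁰}`. -/
def RGGS (q : ℝ) (T : BDTriple n) (r0 : ℕ → ℕ → ℂ) : MatT n :=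
  qr0 n q r0 * RbarGGS q T * qr0 n q r0

/-- `R_J = q^{r⁰} R̄_J q^{r⁰}`. -/
def RJ (q : ℝ) (T : BDTriple n) (r0 : ℕ → ℕ → ℂ) : MatT n :=
  qr0 n q r0 * RbarJ q T * qr0 n q r0

/-- `r⁰ ∈ 𝔥 ∧ 𝔥`, i.e. the coefficient matrix is antisymmetric. -/
def Antisym (n : ℕ) (r0 : ℕ → ℕ → ℂ) : Prop := ∀ i < n, ∀ j < n, r0 i j = -r0 j i

/-- The Belavin–Drinfeld compatibility equations
`((α − τα) ⊗ 1) r⁰ = ½ ((α + τα) ⊗ 1) P⁰` for all `α ∈ Γ₁`, written componentwise. -/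
def Compat (T : BDTriple n) (r0 : ℕ → ℕ → ℂ) : Prop :=
  ∀ s ∈ T.Γ1, ∀ j < n,
    r0 s j - r0 (s + 1) j - r0 (T.τ s) j + r0 (T.τ s + 1) j
      = (1 / 2 : ℂ) *
        ((if j = s then 1 else 0) - (if j = s + 1 then 1 else 0)
          + (if j = T.τ s then 1 else 0) - (if j = T.τ s + 1 then 1 else 0))

/-- `a₊ⁱ` : the part of `a₊` supported on pairs with `β = τⁱα`. -/
def aPlusLev (T : BDTriple n) (i : ℕ) : MatT n :=
  sumRoots n fun p r =>
    if precK T i p r then (-(sgn T p r)) • tens (E n r.1 r.2) (E n p.2 p.1) else 0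

/-- `a₊ = Σ_{α≺β} (−sign(α,β)) e_β ⊗ e_{−α}`. -/
def aPlus (T : BDTriple n) : MatT n :=
  sumRoots n fun p r =>
    if prec T p r then (-(sgn T p r)) • tens (E n r.1 r.2) (E n p.2 p.1) else 0

/-- `a₋ = Σ_{α≺β} sign(α,β) e_{−α} ⊗ e_β`. -/
def aMinus (T : BDTriple n) : MatT n :=
  sumRoots n fun p r =>
    if prec T p r then sgn T p r • tens (E n p.2 p.1) (E n r.1 r.2) else 0

/-- `P₊ = Σ_{i<j} E_{ij}⊗E_{ji} + ½P⁰`. -/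
def PPlus (n : ℕ) : MatT n :=
  (∑ i ∈ range n, ∑ j ∈ range n, if i < j then tens (E n i j) (E n j i) else 0)
    + (1 / 2 : ℂ) • P0 n

/-- `P₋ = Σ_{i>j} E_{ij}⊗E_{ji} + ½P⁰`. -/
def PMinus (n : ℕ) : MatT n :=
  (∑ i ∈ range n, ∑ j ∈ range n, if j < i then tens (E n i j) (E n j i) else 0)
    + (1 / 2 : ℂ) • P0 n

/-- The matrix `Σ_{i≥j} a₊ⁱa₊ʲ − Σ_{i<j} a₊ⁱa₊ʲ + a₊P₋ + a₋P₊ + P₊a₊ + a₊a₋ − a₋a₊`. -/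
def Mmat (T : BDTriple n) : MatT n :=
  (∑ i ∈ range n, ∑ j ∈ range n, if j ≤ i then aPlusLev T (i + 1) * aPlusLev T (j + 1) else 0)
    - (∑ i ∈ range n, ∑ j ∈ range n, if i < j then aPlusLev T (i + 1) * aPlusLev T (j + 1) else 0)
    + aPlus T * PMinus n + aMinus T * PPlus n + PPlus n * aPlus T
    + aPlus T * aMinus T - aMinus T * aPlus T

/-- `L_{α,β}` : `½` if `α ⋖ β`, `−½` if `α ⋗ β`, `0` otherwise. -/
def Lc (p r : ℕ × ℕ) : ℂ :=
  if p.2 = r.1 then 1 / 2 else if r.2 = p.1 then -(1 / 2) else 0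

/-- The part of `M` (viewed on the basis `e_{τα} ⊗ e_{−α}`, `α ∈ Γ̃₁`) supported on
pairs with `α ⋗ τα`. -/
def partGtr (T : BDTriple n) (M : MatT n) : MatT n :=
  sumRoots n fun p r =>
    if tauStep T p r ∧ r.2 = p.1 then coeffBA M p r • tens (E n r.1 r.2) (E n p.2 p.1) else 0

/-- The part of `M` (viewed on the basis `e_{−α} ⊗ e_{τα}`, `α ∈ Γ̃₁`) supported on
pairs with `α ⋖ τα`. -/
def partLess21 (T : BDTriple n) (M : MatT n) : MatT n :=
  sumRoots n fun p r =>
    if tauStep T p r ∧ p.2 = r.1 then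
      entry M p.2 r.1 p.1 r.2 • tens (E n p.2 p.1) (E n r.1 r.2)
    else 0


/-
When `Γ₁ ∩ Γ₂ = ∅`, `τ` can be applied to a root at most once, so `J = 1 + N` with
`N = (q - q⁻¹) Σ_{α ∈ Γ̃₁} sign(α,τα) q^{K_{α,τα}} e_{τα} ⊗ e_{-α}`. This `N` is strictly
triangular, hence nilpotent, and `J⁻¹ = 1 - N J⁻¹`. Read at the entry `e_β ⊗ e_{-α}` with
`α = α_a + ⋯ + α_{b-1}`, this identity expresses `B_{α,β}` through the terms `e_{τα'} ⊗ e_{-α'}`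
of `N` with `α' = α_l + ⋯ + α_{b-1}` and `τα'` starting where `β` starts, each multiplied by
the coefficient of `J⁻¹` for the remaining part `α_a + ⋯ + α_{l-1}`.

Since `τ` preserves `(,)`, it moves the string `α_a, …, α_{b-1}` rigidly, either up or down.
If it preserves orientation, only `α' = α` qualifies, and `B_{α,β}` is minus the coefficient of
`J`. If it reverses orientation, every `l` qualifies. The resulting recursion in the length of
`α` is solved by induction using the telescoping identity
`q^{-i} + (q - q⁻¹) Σ_{e<i} q^{2e+1-i} = q^i`.
-/

section QPow

variable {q : ℝ}

lemma qpow_add (z w : ℂ) : qpow q (z + w) = qpow q z * qpow q w := by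
  simp [qpow, add_mul, Complex.exp_add]

lemma qpow_one (hq : 0 < q) : qpow q 1 = q := by
  simp [qpow, ← Complex.ofReal_exp, Real.exp_log hq]

lemma qpow_neg_one (hq : 0 < q) : qpow q (-1) = (q : ℂ)⁻¹ := by
  refine eq_inv_of_mul_eq_one_left ?_
  rw [← qpow_one hq, ← qpow_add]
  simp [qpow]

lemma sub_inv_mul_qpow (hq : 0 < q) (z : ℂ) :
    ((q : ℂ) - (q : ℂ)⁻¹) * qpow q z = qpow q (z + 1) - qpow q (z - 1) := by
  rw [sub_eq_add_neg z, qpow_add, qpow_add, qpow_one hq, qpow_neg_one hq]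
  ring

lemma qpow_neg_add_sub_inv_mul_sum (hq : 0 < q) (i : ℕ) :
    qpow q (-i) + ((q : ℂ) - (q : ℂ)⁻¹) * ∑ e ∈ range i, qpow q (2 * e + 1 - i)
      = qpow q i := by
  have hterm (e : ℕ) : ((q : ℂ) - (q : ℂ)⁻¹) * qpow q (2 * e + 1 - i)
      = qpow q (2 * ((e + 1 : ℕ) : ℂ) - i) - qpow q (2 * (e : ℂ) - i) := by
    rw [sub_inv_mul_qpow hq]
    push_cast
    ring_nf
  rw [Finset.mul_sum, Finset.sum_congr rfl fun e _ => hterm e,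
    Finset.sum_range_sub (fun e : ℕ => qpow q (2 * (e : ℂ) - i))]
  push_cast
  ring_nf

/-- `L i - D e` plays the role of `L_{α',τα'}` for the piece `α' = α_e + ⋯ + α_i` of an
orientation reversing string. -/
lemma eq_of_rev_recursion (hq : 0 < q) (L D y : ℕ → ℂ) (m : ℕ)
    (hDL : ∀ e < m, D (e + 1) = L e)
    (hy : ∀ i ≤ m, y i = -∑ e ∈ range (i + 1),
      ((q : ℂ) - (q : ℂ)⁻¹) * (-1) ^ (i - e) * qpow q (L i - D e - (i - e : ℕ)) *
        (if e = 0 then 1 else y (e - 1))) :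
    ∀ i ≤ m, y i = (-1) ^ (i + 1) * ((q : ℂ) - (q : ℂ)⁻¹) * qpow q (i + L i - D 0) := by
  intro i
  induction i using Nat.strong_induction_on with
  | _ i ih =>
  intro hi
  set A : ℂ := (q : ℂ) - (q : ℂ)⁻¹
  have hterm : ∀ e < i, A * (-1) ^ (i - (e + 1)) *
        qpow q (L i - D (e + 1) - (i - (e + 1) : ℕ)) * y e
      = (-1) ^ i * A * qpow q (L i - D 0) * (A * qpow q (2 * e + 1 - i)) := by
    intro e he
    have hsign : (-1 : ℂ) ^ (i - (e + 1)) * (-1) ^ (e + 1) = (-1) ^ i := by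
      rw [← pow_add, Nat.sub_add_cancel he]
    have hexp : qpow q (L i - L e - (i - (e + 1) : ℕ)) * qpow q (e + L e - D 0)
        = qpow q (L i - D 0) * qpow q (2 * e + 1 - i) := by
      rw [← qpow_add, ← qpow_add, Nat.cast_sub he]
      push_cast
      ring_nf
    rw [ih e he (by omega), hDL e (by omega)]
    calc _ = ((-1 : ℂ) ^ (i - (e + 1)) * (-1) ^ (e + 1)) * A * A *
          (qpow q (L i - L e - (i - (e + 1) : ℕ)) * qpow q (e + L e - D 0)) := by ring
      _ = _ := by rw [hsign, hexp]; ring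
  have hfirst : qpow q (L i - D 0 - (i - 0 : ℕ)) = qpow q (L i - D 0) * qpow q (-i) := by
    rw [← qpow_add, Nat.sub_zero]
    ring_nf
  have hlast : qpow q (i + L i - D 0) = qpow q (L i - D 0) * qpow q i := by
    rw [← qpow_add]
    ring_nf
  rw [hy i hi, Finset.sum_range_succ']
  simp only [Nat.add_one_ne_zero, if_false, if_true, Nat.add_sub_cancel, mul_one]
  rw [Finset.sum_congr rfl fun e he => hterm e (Finset.mem_range.1 he), ← Finset.mul_sum,
    ← Finset.mul_sum,
    hfirst, hlast, ← qpow_neg_add_sub_inv_mul_sum hq i, Nat.sub_zero]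
  ring

end QPow

section Geometry

variable (T : BDTriple n)

lemma ipn_rvec_left {i j : ℕ} (hi : i < n) (hj : j < n) (y : ℕ → ℂ) :
    ipn n (rvec i j) y = y i - y j := by
  simp [ipn, rvec, evec, sub_mul, Finset.sum_sub_distrib, hi, hj]

lemma ipn_svec_svec {i : ℕ} (hi : i + 1 < n) (j : ℕ) :
    ipn n (svec i) (svec j) = if i = j then 2 else if i + 1 = j ∨ j + 1 = i then -1 else 0 := by
  rw [svec, ipn_rvec_left (by omega) hi]
  simp only [svec, rvec, evec, Pi.sub_apply]
  split_ifs <;> first | omega | norm_num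

lemma tau_mem_Γ2 {i : ℕ} (hi : i ∈ T.Γ1) : T.τ i ∈ T.Γ2 := T.bij.mapsTo hi

lemma tau_add_one_lt {i : ℕ} (hi : i ∈ T.Γ1) : T.τ i + 1 < n := T.mem2 _ (tau_mem_Γ2 T hi)

lemma tau_isometry {i j : ℕ} (hi : i ∈ T.Γ1) (hj : j ∈ T.Γ1) :
    (if T.τ i = T.τ j then (2 : ℂ)
      else if T.τ i + 1 = T.τ j ∨ T.τ j + 1 = T.τ i then -1 else 0)
    = if i = j then 2 else if i + 1 = j ∨ j + 1 = i then -1 else 0 := by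
  rw [← ipn_svec_svec (tau_add_one_lt T hi), ← ipn_svec_svec (T.mem1 _ hi)]
  exact T.isometry i hi j hj

lemma tau_adjacent {i j : ℕ} (hi : i ∈ T.Γ1) (hj : j ∈ T.Γ1) (hij : i + 1 = j) :
    T.τ i + 1 = T.τ j ∨ T.τ j + 1 = T.τ i := by
  have hv := tau_isometry T hi hj
  rw [if_neg (show i ≠ j by omega), if_pos (Or.inl hij)] at hv
  split_ifs at hv with h1 h2 <;> first | exact h2 | norm_num at hv

lemma tau_far {i j : ℕ} (hi : i ∈ T.Γ1) (hj : j ∈ T.Γ1) (hij : i + 2 ≤ j) :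
    T.τ i ≠ T.τ j ∧ T.τ i + 1 ≠ T.τ j ∧ T.τ j + 1 ≠ T.τ i := by
  have hv := tau_isometry T hi hj
  rw [if_neg (show i ≠ j by omega), if_neg (show ¬(i + 1 = j ∨ j + 1 = i) by omega)] at hv
  by_contra
  split_ifs at hv <;> first | omega | norm_num at hv

lemma tau_asc_or_desc {a m : ℕ} (hΓ : ∀ i ≤ m, a + i ∈ T.Γ1) :
    (∀ i ≤ m, T.τ (a + i) = T.τ a + i) ∨ (∀ i ≤ m, T.τ (a + i) + i = T.τ a) := by
  induction m with
  | zero => exact Or.inl fun i hi => by obtain rfl : i = 0 := (by omega); rfl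
  | succ m ih =>
    rcases m with _ | m
    · rcases tau_adjacent T (hΓ 0 (by omega)) (hΓ 1 (by omega)) (by omega) with h | h
      · exact Or.inl fun i hi => by rcases (by omega : i = 0 ∨ i = 1) with rfl | rfl <;> simp_all
      · exact Or.inr fun i hi => by rcases (by omega : i = 0 ∨ i = 1) with rfl | rfl <;> simp_all
    · have hadj := tau_adjacent T (hΓ (m + 1) (by omega)) (hΓ (m + 2) (by omega)) (by omega)
      have hfar := tau_far T (hΓ m (by omega)) (hΓ (m + 2) (by omega)) (by omega)
      rcases ih fun i hi => hΓ i (by omega) with h | h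
      · refine Or.inl fun i hi => ?_
        rcases (by omega : i ≤ m + 1 ∨ i = m + 2) with hi | rfl
        · exact h i hi
        · have := h m (by omega); have := h (m + 1) le_rfl; omega
      · refine Or.inr fun i hi => ?_
        rcases (by omega : i ≤ m + 1 ∨ i = m + 2) with hi | rfl
        · exact h i hi
        · have := h m (by omega); have := h (m + 1) le_rfl; omega

lemma rvec_add_rvec (u x y : ℕ) : rvec u x + rvec x y = rvec u y := by
  unfold rvec; abel

lemma eq_and_eq_of_rvec_eq {u v u' v' : ℕ} (h : u < v) (he : rvec u v = rvec u' v') :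
    u = u' ∧ v = v' := by
  have hu := congrFun he u
  have hv := congrFun he v
  simp only [rvec, evec, Pi.sub_apply, if_neg h.ne, if_neg h.ne'] at hu hv
  constructor
  · by_contra hc
    rw [if_neg hc] at hu
    split_ifs at hu <;> norm_num at hu
  · by_contra hc
    rw [if_neg hc] at hv
    split_ifs at hv <;> norm_num at hv

lemma sum_svec_of_asc (f : ℕ → ℕ) (l m : ℕ) (hf : ∀ i ≤ m, f (l + i) = f l + i) :
    ∑ k ∈ Ico l (l + m + 1), svec (f k) = rvec (f l) (f l + m + 1) := by
  induction m with
  | zero => simp [svec]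
  | succ m ih =>
    have hlast : f (l + m + 1) = f l + m + 1 := hf (m + 1) le_rfl
    rw [show l + (m + 1) + 1 = l + m + 1 + 1 by ring, Finset.sum_Ico_succ_top (by omega),
      ih fun i hi => hf i (by omega), hlast, svec, rvec_add_rvec]
    rfl

lemma sum_svec_of_desc (f : ℕ → ℕ) (l m : ℕ) (hf : ∀ i ≤ m, f (l + i) + i = f l) :
    ∑ k ∈ Ico l (l + m + 1), svec (f k) = rvec (f (l + m)) (f l + 1) := by
  induction m with
  | zero => simp [svec]
  | succ m ih =>
    have hlast : f (l + m + 1) + 1 = f (l + m) := by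
      have h1 : f (l + m + 1) + (m + 1) = f l := hf (m + 1) le_rfl
      have h2 := hf m (by omega)
      omega
    rw [show l + (m + 1) + 1 = l + m + 1 + 1 by ring, Finset.sum_Ico_succ_top (by omega),
      ih fun i hi => hf i (by omega), svec, hlast, add_comm, rvec_add_rvec]
    rfl

end Geometry

section TauStep

variable (T : BDTriple n)

lemma spanRoot_iff {a m : ℕ} : SpanRoot T a (a + m + 1) ↔ ∀ i ≤ m, a + i ∈ T.Γ1 := by
  refine ⟨fun h i hi => h.2 _ (by omega) (by omega),
    fun h => ⟨by omega, fun k hk1 hk2 => ?_⟩⟩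
  simpa [Nat.add_sub_cancel' hk1] using h (k - a) (by omega)

lemma tauStep_unique {p r r' : ℕ × ℕ} (h : tauStep T p r) (h' : tauStep T p r') : r = r' := by
  have := eq_and_eq_of_rvec_eq h.2.1 (h.2.2.trans h'.2.2.symm)
  exact Prod.ext this.1 this.2

lemma tauStep_of_asc {a m : ℕ} (hΓ : ∀ i ≤ m, a + i ∈ T.Γ1)
    (hasc : ∀ i ≤ m, T.τ (a + i) = T.τ a + i) :
    tauStep T (a, a + m + 1) (T.τ a, T.τ a + m + 1) :=
  ⟨(spanRoot_iff T).2 hΓ, by simp only; omega, (sum_svec_of_asc T.τ a m hasc).symm⟩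

lemma tauStep_of_desc {a m : ℕ} (hΓ : ∀ i ≤ m, a + i ∈ T.Γ1)
    (hdesc : ∀ i ≤ m, T.τ (a + i) + i = T.τ a) :
    tauStep T (a, a + m + 1) (T.τ (a + m), T.τ a + 1) :=
  ⟨(spanRoot_iff T).2 hΓ, by have := hdesc m le_rfl; simp only; omega,
    (sum_svec_of_desc T.τ a m hdesc).symm⟩

lemma tauStep_of_asc_sub {a m e : ℕ} (hΓ : ∀ i ≤ m, a + i ∈ T.Γ1)
    (hasc : ∀ i ≤ m, T.τ (a + i) = T.τ a + i) (hem : e ≤ m) :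
    tauStep T (a + e, a + m + 1) (T.τ (a + e), T.τ (a + e) + (m - e) + 1) := by
  have h := tauStep_of_asc T (a := a + e) (m := m - e)
    (fun j hj => by simpa [add_assoc] using hΓ (e + j) (by omega))
    (fun j hj => by
      have h1 := hasc (e + j) (by omega)
      have h2 := hasc e hem
      rw [show a + (e + j) = a + e + j by omega] at h1
      omega)
  rwa [show a + e + (m - e) = a + m by omega] at h

lemma tauStep_of_desc_sub {a m e i : ℕ} (hΓ : ∀ i ≤ m, a + i ∈ T.Γ1)
    (hdesc : ∀ i ≤ m, T.τ (a + i) + i = T.τ a) (hei : e ≤ i) (him : i ≤ m) :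
    tauStep T (a + e, a + i + 1) (T.τ (a + i), T.τ (a + e) + 1) := by
  have h := tauStep_of_desc T (a := a + e) (m := i - e)
    (fun j hj => by simpa [add_assoc] using hΓ (e + j) (by omega))
    (fun j hj => by
      have h1 := hdesc (e + j) (by omega)
      have h2 := hdesc e (by omega)
      rw [show a + (e + j) = a + e + j by omega] at h1
      omega)
  rwa [show a + e + (i - e) = a + i by omega] at h

lemma asc_of_tauStep {a m : ℕ} {r : ℕ × ℕ} (h : tauStep T (a, a + m + 1) r)
    (hr : T.τ a = r.1) : ∀ i ≤ m, T.τ (a + i) = T.τ a + i := by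
  have hΓ : ∀ i ≤ m, a + i ∈ T.Γ1 := (spanRoot_iff T).1 h.1
  rcases tau_asc_or_desc T hΓ with hasc | hdesc
  · exact hasc
  · obtain rfl := tauStep_unique T h (tauStep_of_desc T hΓ hdesc)
    have := hdesc m le_rfl
    intro i hi
    obtain rfl : i = 0 := by simp only at hr; omega
    rfl

lemma desc_of_tauStep {a m : ℕ} {r : ℕ × ℕ} (h : tauStep T (a, a + m + 1) r)
    (hr : T.τ a + 1 = r.2) : ∀ i ≤ m, T.τ (a + i) + i = T.τ a := by
  have hΓ : ∀ i ≤ m, a + i ∈ T.Γ1 := (spanRoot_iff T).1 h.1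
  rcases tau_asc_or_desc T hΓ with hasc | hdesc
  · obtain rfl := tauStep_unique T h (tauStep_of_asc T hΓ hasc)
    intro i hi
    obtain rfl : i = 0 := by simp only at hr; omega
    rfl
  · exact hdesc

lemma tauStep_image {p r : ℕ × ℕ} (h : tauStep T p r) : r.1 ∈ T.Γ2 ∧ r.2 < n := by
  obtain ⟨a, b⟩ := p
  have hab : a < b := h.1.1
  obtain ⟨m, rfl⟩ := Nat.exists_eq_add_of_lt hab
  have hΓ : ∀ i ≤ m, a + i ∈ T.Γ1 := (spanRoot_iff T).1 h.1
  have ha : a ∈ T.Γ1 := by simpa using hΓ 0 (Nat.zero_le _)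
  rcases tau_asc_or_desc T hΓ with hasc | hdesc
  · obtain rfl := tauStep_unique T h (tauStep_of_asc T hΓ hasc)
    have := tau_add_one_lt T (hΓ m le_rfl)
    have := hasc m le_rfl
    exact ⟨tau_mem_Γ2 T ha, by simp only; omega⟩
  · obtain rfl := tauStep_unique T h (tauStep_of_desc T hΓ hdesc)
    exact ⟨tau_mem_Γ2 T (hΓ m le_rfl), tau_add_one_lt T ha⟩

lemma tauStep_bounds {p r : ℕ × ℕ} (h : tauStep T p r) :
    p.1 < p.2 ∧ p.2 < n ∧ r.1 < r.2 ∧ r.2 < n := by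
  have := h.1.1
  have := T.mem1 _ (h.1.2 (p.2 - 1) (by omega) (by omega))
  exact ⟨h.1.1, by omega, h.2.1, (tauStep_image T h).2⟩

end TauStep

section Disjoint

variable (T : BDTriple n)

lemma not_tauStep_of_tauStep (hdisj : T.Γ1 ∩ T.Γ2 = ∅) {p r r' : ℕ × ℕ}
    (h : tauStep T p r) : ¬tauStep T r r' :=
  fun h' => Finset.notMem_empty r.1 <|
    hdisj ▸ Finset.mem_inter.2 ⟨h'.1.2 _ le_rfl h'.1.1, (tauStep_image T h).1⟩

lemma precK_one_iff {p r : ℕ × ℕ} : precK T 1 p r ↔ tauStep T p r :=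
  ⟨fun ⟨_, h, hg⟩ => hg ▸ h, fun h => ⟨r, h, rfl⟩⟩

lemma precK_succ_iff (hdisj : T.Γ1 ∩ T.Γ2 = ∅) {k : ℕ} {p r : ℕ × ℕ} :
    precK T (k + 1) p r ↔ k = 0 ∧ tauStep T p r := by
  rcases k with _ | k
  · simp [precK_one_iff]
  · simp only [Nat.add_one_ne_zero, false_and, iff_false]
    rintro ⟨g, h, g', h', -⟩
    exact not_tauStep_of_tauStep T hdisj h h'

lemma prec_iff (hdisj : T.Γ1 ∩ T.Γ2 = ∅) {p r : ℕ × ℕ} :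
    prec T p r ↔ tauStep T p r := by
  simp [prec, precK_succ_iff T hdisj]

lemma revOri_iff (hdisj : T.Γ1 ∩ T.Γ2 = ∅) {p r : ℕ × ℕ} :
    RevOri T p r ↔ tauStep T p r ∧ T.τ p.1 + 1 = r.2 := by
  simp only [RevOri, precK_succ_iff T hdisj]
  constructor
  · rintro ⟨_, ⟨rfl, h⟩, he⟩
    have := h.2.1
    change T.τ p.1 = r.2 - 1 at he
    exact ⟨h, by omega⟩
  · rintro ⟨h, he⟩
    exact ⟨0, ⟨rfl, h⟩, show T.τ p.1 = r.2 - 1 by omega⟩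

lemma presOri_iff (hdisj : T.Γ1 ∩ T.Γ2 = ∅) {p r : ℕ × ℕ} :
    PresOri T p r ↔ tauStep T p r ∧ T.τ p.1 = r.1 := by
  simp [PresOri, precK_succ_iff T hdisj]

lemma Kc_of_revOri (hdisj : T.Γ1 ∩ T.Γ2 = ∅) {p r : ℕ × ℕ} (h : RevOri T p r) :
    Kc T p r = (if p.2 = r.1 then (1 / 2 : ℂ) else 0) - (if r.2 = p.1 then (1 / 2 : ℂ) else 0)
      + 1 - (p.2 - p.1 : ℕ) := by
  have hmid (P : ℕ × ℕ → Prop) : ¬∃ g, prec T p g ∧ prec T g r ∧ P g :=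
    fun ⟨_, h1, h2, _⟩ =>
      not_tauStep_of_tauStep T hdisj ((prec_iff T hdisj).1 h1) ((prec_iff T hdisj).1 h2)
  rw [Kc, if_neg (hmid _), if_neg (hmid _), if_pos h]
  ring

lemma sgn_of_asc (hdisj : T.Γ1 ∩ T.Γ2 = ∅) {a m : ℕ} :
    sgn T (a, a + m + 1) (T.τ a, T.τ a + m + 1) = 1 := by
  rw [sgn, ite_eq_right_iff]
  intro h
  have := ((revOri_iff T hdisj).1 h).2
  simp only at this
  rw [show a + m + 1 - a - 1 = 0 by omega, pow_zero]

end Disjoint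

section Entry

@[simp]
lemma entry_coe (M : MatT n) (a b c d : Fin n) : entry M a b c d = M (a, b) (c, d) := by
  simp [entry]

lemma entry_of_not_lt (M : MatT n) {a b c d : ℕ} (h : ¬(a < n ∧ b < n ∧ c < n ∧ d < n)) :
    entry M a b c d = 0 :=
  dif_neg h

lemma entry_sub (M N : MatT n) (a b c d : ℕ) :
    entry (M - N) a b c d = entry M a b c d - entry N a b c d := by
  unfold entry
  split_ifs <;> simp

lemma entry_one (a b c d : ℕ) :
    entry (1 : MatT n) a b c d = if a = c ∧ b = d ∧ a < n ∧ b < n then 1 else 0 := by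
  unfold entry
  split_ifs with h h' h' <;> simp [Matrix.one_apply, Prod.ext_iff, Fin.ext_iff] at * <;> omega

lemma entry_mul (M N : MatT n) (a b c d : ℕ) :
    entry (M * N) a b c d =
      ∑ k ∈ range n, ∑ l ∈ range n, entry M a b k l * entry N k l c d := by
  by_cases h : a < n ∧ b < n ∧ c < n ∧ d < n
  · obtain ⟨ha, hb, hc, hd⟩ := h
    lift a to Fin n using ha
    lift b to Fin n using hb
    lift c to Fin n using hc
    lift d to Fin n using hd
    simp only [entry_coe, Matrix.mul_apply, Fintype.sum_prod_type, Finset.sum_range]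
  · rw [entry_of_not_lt _ h]
    refine (Finset.sum_eq_zero fun k hk => Finset.sum_eq_zero fun l hl => ?_).symm
    by_cases hab : a < n ∧ b < n
    · rw [entry_of_not_lt N (by simp only [Finset.mem_range] at hk hl; omega), mul_zero]
    · rw [entry_of_not_lt M (by tauto), zero_mul]

lemma entry_sumRoots (P : ℕ × ℕ → ℕ × ℕ → Prop) (f : ℕ × ℕ → ℕ × ℕ → ℂ)
    (a b c d : ℕ) :
    entry (sumRoots n fun p r => if P p r then f p r • tens (E n r.1 r.2) (E n p.2 p.1) else 0)
        a b c d =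
      if a < n ∧ b < n ∧ c < n ∧ d < n ∧ P (d, b) (a, c) then f (d, b) (a, c) else 0 := by
  by_cases h : a < n ∧ b < n ∧ c < n ∧ d < n
  · obtain ⟨ha, hb, hc, hd⟩ := h
    lift a to Fin n using ha
    lift b to Fin n using hb
    lift c to Fin n using hc
    lift d to Fin n using hd
    have hterm (i j k l : ℕ) :
        (if P (i, j) (k, l) then f (i, j) (k, l) • tens (E n k l) (E n j i) else 0 : MatT n)
          (a, b) (c, d) =
          if (c : ℕ) = l then if (a : ℕ) = k then if (b : ℕ) = j then if (d : ℕ) = i then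
            (if P (i, j) (k, l) then f (i, j) (k, l) else 0)
          else 0 else 0 else 0 else 0 := by
      split_ifs <;> simp_all [tens, E]
    simp [sumRoots, Matrix.sum_apply, hterm, Finset.sum_ite_eq]
  · rw [entry_of_not_lt _ h, if_neg (by tauto)]

end Entry

section JMatrix

variable (q : ℝ) (T : BDTriple n)

def jCoeff (p r : ℕ × ℕ) : ℂ := ((q : ℂ) - (q : ℂ)⁻¹) * sgn T p r * qpow q (Kc T p r)

def nilJ : MatT n :=
  sumRoots n fun p r =>
    if tauStep T p r then jCoeff q T p r • tens (E n r.1 r.2) (E n p.2 p.1) else 0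

lemma Jlevel_one : Jlevel q T 1 = 1 + nilJ q T := by
  simp only [Jlevel, nilJ, jCoeff, precK_one_iff]

lemma Jlevel_add_two (hdisj : T.Γ1 ∩ T.Γ2 = ∅) (k : ℕ) : Jlevel q T (k + 2) = 1 := by
  simp [Jlevel, precK_succ_iff T hdisj, sumRoots]

lemma Jmat_eq_one_add_nilJ (hdisj : T.Γ1 ∩ T.Γ2 = ∅) : Jmat q T = 1 + nilJ q T := by
  rcases n with _ | n
  · exact Subsingleton.elim _ _
  rw [Jmat, List.range_succ_eq_map, List.map_cons, List.prod_cons, List.map_map,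
    List.prod_eq_one, mul_one, zero_add, Jlevel_one]
  simp [Jlevel_add_two q T hdisj]

lemma jCoeff_of_revOri (hdisj : T.Γ1 ∩ T.Γ2 = ∅) {p r : ℕ × ℕ} (h : tauStep T p r)
    (hrev : T.τ p.1 + 1 = r.2) :
    jCoeff q T p r = ((q : ℂ) - (q : ℂ)⁻¹) * (-1) ^ (p.2 - p.1 - 1) *
      qpow q ((if p.2 = r.1 then (1 / 2 : ℂ) else 0) - (if r.2 = p.1 then (1 / 2 : ℂ) else 0)
        + 1 - (p.2 - p.1 : ℕ)) := by
  have hR := (revOri_iff T hdisj).2 ⟨h, hrev⟩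
  rw [jCoeff, sgn, if_pos hR, Kc_of_revOri T hdisj hR]

lemma entry_nilJ (a b c d : ℕ) :
    entry (nilJ q T) a b c d = if tauStep T (d, b) (a, c) then jCoeff q T (d, b) (a, c) else 0 := by
  rw [nilJ, entry_sumRoots]
  by_cases h : tauStep T (d, b) (a, c)
  · have := tauStep_bounds T h
    simp only at this
    rw [if_pos ⟨by omega, by omega, by omega, by omega, h⟩, if_pos h]
  · rw [if_neg (by tauto), if_neg h]

lemma entry_nilJ_pow (k : ℕ) : ∀ a b c d, b < d + k → entry (nilJ q T ^ k) a b c d = 0 := by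
  induction k with
  | zero => intro a b c d h; rw [pow_zero, entry_one, if_neg (by omega)]
  | succ k ih =>
    intro a b c d h
    rw [pow_succ', entry_mul]
    refine Finset.sum_eq_zero fun k' _ => Finset.sum_eq_zero fun l _ => ?_
    rw [entry_nilJ]
    split_ifs with hs
    · rw [ih _ _ _ _ (by have := hs.1.1; simp only at this; omega), mul_zero]
    · rw [zero_mul]

lemma isNilpotent_nilJ : IsNilpotent (nilJ q T) :=
  ⟨n, Matrix.ext fun ⟨a, b⟩ ⟨c, d⟩ =>
    (entry_coe _ a b c d).symm.trans (entry_nilJ_pow q T n a b c d (by omega))⟩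

lemma Jmat_mul_inv (hdisj : T.Γ1 ∩ T.Γ2 = ∅) : Jmat q T * (Jmat q T)⁻¹ = 1 := by
  rw [Jmat_eq_one_add_nilJ q T hdisj]
  exact Matrix.mul_nonsing_inv _
    ((Matrix.isUnit_iff_isUnit_det _).1 (isNilpotent_nilJ q T).isUnit_one_add)

lemma entry_Jinv (hdisj : T.Γ1 ∩ T.Γ2 = ∅) (a b c d : ℕ) :
    entry (Jmat q T)⁻¹ a b c d = entry (1 : MatT n) a b c d -
      ∑ k ∈ range n, ∑ l ∈ range n,
        entry (nilJ q T) a b k l * entry (Jmat q T)⁻¹ k l c d := by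
  have hY := Jmat_mul_inv q T hdisj
  generalize (Jmat q T)⁻¹ = Y at hY ⊢
  rw [Jmat_eq_one_add_nilJ q T hdisj, add_mul, one_mul] at hY
  conv_lhs => rw [eq_sub_of_add_eq hY]
  rw [entry_sub, entry_mul]

lemma entry_Jinv_of_le (hdisj : T.Γ1 ∩ T.Γ2 = ∅) {b d : ℕ} (hbd : b ≤ d) (a c : ℕ) :
    entry (Jmat q T)⁻¹ a b c d = entry (1 : MatT n) a b c d := by
  induction b using Nat.strong_induction_on generalizing a with
  | _ b ih =>
  rw [entry_Jinv q T hdisj, sub_eq_self]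
  refine Finset.sum_eq_zero fun k _ => Finset.sum_eq_zero fun l _ => ?_
  rw [entry_nilJ]
  split_ifs with hs
  · have hl : l < b := hs.1.1
    rw [ih l hl (by omega), entry_one, if_neg (by omega), mul_zero]
  · rw [zero_mul]

lemma sum_ite_tauStep {p r : ℕ × ℕ} (h : tauStep T p r) (a : ℕ) (g : ℕ → ℂ) :
    ∑ k ∈ range n, (if tauStep T p (a, k) then g k else 0) = if r.1 = a then g r.2 else 0 := by
  split_ifs with ha
  · subst ha
    rw [Finset.sum_eq_single r.2]
    · rw [if_pos h]
    · exact fun k _ hk => if_neg fun h' => hk (congrArg Prod.snd (tauStep_unique T h' h))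
    · exact fun hr => absurd (Finset.mem_range.2 (tauStep_bounds T h).2.2.2) hr
  · exact Finset.sum_eq_zero fun k _ =>
      if_neg fun h' => ha (congrArg Prod.fst (tauStep_unique T h h'))

lemma entry_Jinv_row (hdisj : T.Γ1 ∩ T.Γ2 = ∅) (A c a i : ℕ) (hi : a + i + 1 < n) :
    entry (Jmat q T)⁻¹ A (a + i + 1) c a = -∑ e ∈ range (i + 1), ∑ k ∈ range n,
      if tauStep T (a + e, a + i + 1) (A, k) then
        jCoeff q T (a + e, a + i + 1) (A, k) * entry (Jmat q T)⁻¹ k (a + e) c a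
      else 0 := by
  rw [entry_Jinv q T hdisj, entry_one, if_neg (by omega), zero_sub, Finset.sum_comm]
  simp only [entry_nilJ, ite_mul, zero_mul]
  rw [← Finset.sum_subset (s₁ := Ico a (a + i + 1)), Finset.sum_Ico_eq_sum_range,
    show a + i + 1 - a = i + 1 by omega]
  · intro l hl
    simp only [Finset.mem_Ico, Finset.mem_range] at hl ⊢
    omega
  · intro l _ hl
    refine Finset.sum_eq_zero fun k _ => ?_
    split_ifs with hs
    · have := hs.1.1
      simp only [Finset.mem_Ico] at hl this
      rw [entry_Jinv_of_le q T hdisj (by omega), entry_one, if_neg (by omega), mul_zero]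
    · rfl

end JMatrix

section Coefficients

variable (q : ℝ) (T : BDTriple n)

lemma entry_Jinv_of_asc (hdisj : T.Γ1 ∩ T.Γ2 = ∅) {a m : ℕ}
    (hΓ : ∀ i ≤ m, a + i ∈ T.Γ1)
    (hasc : ∀ i ≤ m, T.τ (a + i) = T.τ a + i) :
    entry (Jmat q T)⁻¹ (T.τ a) (a + m + 1) (T.τ a + m + 1) a
      = -jCoeff q T (a, a + m + 1) (T.τ a, T.τ a + m + 1) := by
  have hstep := tauStep_of_asc T hΓ hasc
  have hbounds := tauStep_bounds T hstep
  simp only at hbounds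
  rw [entry_Jinv_row q T hdisj _ _ _ _ hbounds.2.1, Finset.sum_eq_single 0]
  · simp only [add_zero]
    rw [sum_ite_tauStep T hstep, if_pos rfl, entry_Jinv_of_le q T hdisj le_rfl, entry_one,
      if_pos ⟨rfl, rfl, by omega, by omega⟩, mul_one]
  · intro e he he0
    have hem : e ≤ m := Nat.lt_succ_iff.1 (Finset.mem_range.1 he)
    rw [sum_ite_tauStep T (tauStep_of_asc_sub T hΓ hasc hem), if_neg]
    have := hasc e hem
    omega
  · exact fun h => absurd (Finset.mem_range.2 (Nat.succ_pos m)) h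

lemma entry_Jinv_desc_rest (hdisj : T.Γ1 ∩ T.Γ2 = ∅) {a m e : ℕ}
    (hΓ : ∀ i ≤ m, a + i ∈ T.Γ1) (hdesc : ∀ i ≤ m, T.τ (a + i) + i = T.τ a) (hem : e ≤ m) :
    entry (Jmat q T)⁻¹ (T.τ (a + e) + 1) (a + e) (T.τ a + 1) a =
      if e = 0 then 1
      else entry (Jmat q T)⁻¹ (T.τ (a + (e - 1))) (a + (e - 1) + 1) (T.τ a + 1) a := by
  split_ifs with he0
  · have ha : a ∈ T.Γ1 := by simpa using hΓ 0 (Nat.zero_le _)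
    have := T.mem1 _ ha
    subst he0
    simp only [add_zero]
    rw [entry_Jinv_of_le q T hdisj le_rfl, entry_one,
      if_pos ⟨rfl, rfl, tau_add_one_lt T ha, by omega⟩]
  · obtain ⟨e, rfl⟩ := Nat.exists_eq_add_one_of_ne_zero he0
    have h1 := hdesc e (by omega)
    have h2 : T.τ (a + (e + 1)) + (e + 1) = T.τ a := hdesc (e + 1) hem
    rw [Nat.add_sub_cancel, show T.τ (a + (e + 1)) + 1 = T.τ (a + e) by omega]
    rfl

lemma entry_Jinv_of_desc (hq : 0 < q) (hdisj : T.Γ1 ∩ T.Γ2 = ∅) {a m : ℕ}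
    (hΓ : ∀ i ≤ m, a + i ∈ T.Γ1) (hdesc : ∀ i ≤ m, T.τ (a + i) + i = T.τ a) :
    ∀ i ≤ m, entry (Jmat q T)⁻¹ (T.τ (a + i)) (a + i + 1) (T.τ a + 1) a
      = (-1) ^ (i + 1) * ((q : ℂ) - (q : ℂ)⁻¹) *
        qpow q (i + (if a + i + 1 = T.τ (a + i) then (1 / 2 : ℂ) else 0)
          - (if T.τ a + 1 = a then (1 / 2 : ℂ) else 0)) := by
  refine eq_of_rev_recursion hq (fun i => if a + i + 1 = T.τ (a + i) then 1 / 2 else 0)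
    (fun e => if T.τ (a + e) + 1 = a + e then 1 / 2 else 0)
    (fun i => entry (Jmat q T)⁻¹ (T.τ (a + i)) (a + i + 1) (T.τ a + 1) a) m
    (fun e he => ?_) (fun i hi => ?_)
  · have h1 := hdesc e he.le
    have h2 : T.τ (a + (e + 1)) + (e + 1) = T.τ a := hdesc (e + 1) he
    simp only [show T.τ (a + (e + 1)) + 1 = a + (e + 1) ↔ a + e + 1 = T.τ (a + e) by omega]
  · rw [entry_Jinv_row q T hdisj _ _ _ _ (T.mem1 _ (hΓ i hi))]
    congr 1
    refine Finset.sum_congr rfl fun e he => ?_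
    have hei : e ≤ i := Nat.lt_succ_iff.1 (Finset.mem_range.1 he)
    have hpiece := tauStep_of_desc_sub T hΓ hdesc hei hi
    rw [sum_ite_tauStep T hpiece, if_pos rfl, jCoeff_of_revOri q T hdisj hpiece rfl,
      entry_Jinv_desc_rest q T hdisj hΓ hdesc (hei.trans hi),
      show a + i + 1 - (a + e) - 1 = i - e by omega, show a + i + 1 - (a + e) = i - e + 1 by omega]
    push_cast
    ring_nf

lemma Lc_eq_sub {p r : ℕ × ℕ} (hp : p.1 < p.2) (hr : r.1 < r.2) :
    Lc p r =
      (if p.2 = r.1 then (1 / 2 : ℂ) else 0) - (if r.2 = p.1 then (1 / 2 : ℂ) else 0) := by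
  unfold Lc
  split_ifs <;> first | omega | ring

end Coefficients

theorem stmt_11_general {n : ℕ} (q : ℝ) (hq : 0 < q)
    (T : BDTriple n) (hdisj : T.Γ1 ∩ T.Γ2 = ∅)
    (p r : ℕ × ℕ) (hstep : tauStep T p r) :
    (PresOri T p r →
      coeffBA ((Jmat q T)⁻¹ - 1) p r = -(((q : ℂ) - (q : ℂ)⁻¹) * qpow q (Kc T p r))) ∧
    (RevOri T p r →
      coeffBA ((Jmat q T)⁻¹ - 1) p r
        = -(sgn T p r) * ((q : ℂ) - (q : ℂ)⁻¹) *
            qpow q (((p.2 - p.1 : ℕ) : ℂ) - 1 + Lc p r)) := by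
  obtain ⟨a, b⟩ := p
  have hab : a < b := hstep.1.1
  obtain ⟨m, rfl⟩ := Nat.exists_eq_add_of_lt hab
  have hΓ : ∀ i ≤ m, a + i ∈ T.Γ1 := (spanRoot_iff T).1 hstep.1
  rw [coeffBA, entry_sub, entry_one, if_neg (by omega), sub_zero]
  refine ⟨fun hpres => ?_, fun hrev => ?_⟩
  · have hasc := asc_of_tauStep T hstep ((presOri_iff T hdisj).1 hpres).2
    obtain rfl := tauStep_unique T hstep (tauStep_of_asc T hΓ hasc)
    rw [entry_Jinv_of_asc q T hdisj hΓ hasc, jCoeff, sgn_of_asc T hdisj, mul_one]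
  · have hdesc := desc_of_tauStep T hstep ((revOri_iff T hdisj).1 hrev).2
    obtain rfl := tauStep_unique T hstep (tauStep_of_desc T hΓ hdesc)
    have hr := (tauStep_bounds T hstep).2.2.1
    have hexp : (((a + m + 1 - a : ℕ)) : ℂ) - 1 + Lc (a, a + m + 1) (T.τ (a + m), T.τ a + 1)
        = m + (if a + m + 1 = T.τ (a + m) then (1 / 2 : ℂ) else 0)
          - (if T.τ a + 1 = a then (1 / 2 : ℂ) else 0) := by
      rw [Lc_eq_sub (by omega) hr, show a + m + 1 - a = m + 1 by omega]
      push_cast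
      ring
    rw [entry_Jinv_of_desc q T hq hdisj hΓ hdesc m le_rfl, sgn, if_pos hrev, hexp,
      show a + m + 1 - a - 1 = m by omega]
    ring

/-- in the disjoint case, the coefficients `B_{α,τα}` of `J⁻¹ − 1`:
`B_{α,β} = −(q−q⁻¹)q^{K_{α,β}}` when `τ` preserves orientation, and
`B_{α,β} = −sign(α,β)(q−q⁻¹)q^{|α|−1+L_{α,β}}` when it reverses orientation. -/
theorem stmt_11 {n : ℕ} (hn : 2 ≤ n) (q : ℝ) (hq : 0 < q) (hq1 : q ≠ 1)
    (T : BDTriple n) (hdisj : T.Γ1 ∩ T.Γ2 = ∅)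
    (p r : ℕ × ℕ) (hstep : tauStep T p r) :
    (PresOri T p r →
      coeffBA ((Jmat q T)⁻¹ - 1) p r = -(((q : ℂ) - (q : ℂ)⁻¹) * qpow q (Kc T p r))) ∧
    (RevOri T p r →
      coeffBA ((Jmat q T)⁻¹ - 1) p r
        = -(sgn T p r) * ((q : ℂ) - (q : ℂ)⁻¹) *
            qpow q (((p.2 - p.1 : ℕ) : ℂ) - 1 + Lc p r)) :=
  stmt_11_general q hq T hdisj p r hstep

end
end GGS
end

section
/- Let (Γ₁, Γ₂, τ) be any Belavin–Drinfeld triple, q > 0 with q ≠ 1, and r⁰ = Σr⁰_{ij}E_{ii}⊗E_{jj} any matrix with r⁰_{ij} = −r⁰_{ji} ∈ ℂ. Then R_J = q^{r⁰} J⁻¹ R_s J₂₁ q^{r⁰} satisfies the Hecke relation: (P·R_J − q)(P·R_J + q⁻¹) = 0. -/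
/-!
Conjugation by the flip `P` swaps the tensor factors, `P X = X₂₁ P`. Hence
`P R_J = U⁻¹ (P R_s) U` with `U = J₂₁ q^{r⁰}`, because antisymmetry of `r⁰` makes `(q^{r⁰})₂₁` the
inverse of `q^{r⁰}`. So the Hecke relation for `R_J` is that of `R_s`: `P R_s` acts on `e_i ⊗ e_i`
by `q` and preserves each plane `span {e_i ⊗ e_j, e_j ⊗ e_i}` (`i < j`), with trace `q − q⁻¹` and
determinant `−1` there. `J` is invertible since each `Jᵏ − 1` is a combination of `e_β ⊗ e_{−α}`
with `β > 0`, hence strictly upper triangular in the first tensor factor and nilpotent.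
-/

namespace GGS

open Finset
open scoped Classical

noncomputable section

variable {n : ℕ}

lemma sum_sum_eq_single {M : Type*} [AddCommMonoid M] (a b : Fin n) (f : ℕ → ℕ → M)
    (h : ∀ i j : Fin n, (i, j) ≠ (a, b) → f i j = 0) :
    ∑ i ∈ range n, ∑ j ∈ range n, f i j = f a b := by
  simp only [← Fin.sum_univ_eq_sum_range]
  rw [← Fintype.sum_prod_type', Fintype.sum_eq_single (a, b) fun x hx => h x.1 x.2 hx]

lemma tens_E_apply (i j k l : ℕ) (p r : Fin n × Fin n) :
    tens (E n i j) (E n k l) p r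
      = if (p.1 : ℕ) = i ∧ (r.1 : ℕ) = j ∧ (p.2 : ℕ) = k ∧ (r.2 : ℕ) = l then 1 else 0 := by
  simp only [tens, E, ite_and]
  split_ifs <;> simp

lemma P0_apply (p r : Fin n × Fin n) :
    P0 n p r = if p.1 = p.2 ∧ r = p then 1 else 0 := by
  simp [P0, Matrix.sum_apply, tens, E, Fin.val_inj, ite_and, Prod.ext_iff]
  grind

lemma RsQ_apply (q : ℝ) (p r : Fin n × Fin n) :
    RsQ n q p r =
      (if r = p then (if p.1 = p.2 then (q : ℂ) else 1) else 0)
        + (if p.2 < p.1 ∧ r = (p.2, p.1) then ((q : ℂ) - (q : ℂ)⁻¹) else 0) := by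
  simp only [RsQ, Matrix.add_apply, Matrix.smul_apply, Matrix.sum_apply, P0_apply,
    apply_ite (fun M : MatT n => M p r), Matrix.zero_apply, tens_E_apply]
  rw [sum_sum_eq_single p.1 p.2, sum_sum_eq_single p.1 p.2]
  · simp only [Prod.ext_iff, Fin.lt_def, Fin.ext_iff, smul_eq_mul, true_and]
    split_ifs <;> first | ring1 | (exfalso; omega)
  all_goals
    intro i j hij
    simp only [ne_eq, Prod.mk.injEq, Fin.ext_iff] at hij ⊢
    split_ifs <;> first | rfl | omega

lemma Pm_eq_toMatrix : Pm n = (Equiv.prodComm (Fin n) (Fin n)).toPEquiv.toMatrix := by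
  ext p r
  simp [Pm, PEquiv.toMatrix_apply, Matrix.sum_apply, tens, E, Fin.val_inj, ite_and, Prod.ext_iff]
  grind

def swapAlgEquiv : MatT n ≃ₐ[ℂ] MatT n :=
  Matrix.reindexAlgEquiv ℂ ℂ (Equiv.prodComm (Fin n) (Fin n))

@[simp]
lemma swapAlgEquiv_apply (M : MatT n) : swapAlgEquiv M = swap21 M := rfl

lemma swap21_diagonal (d : Fin n × Fin n → ℂ) :
    swap21 (Matrix.diagonal d) = Matrix.diagonal fun p => d (p.2, p.1) := by
  ext p r
  simp [swap21, Matrix.diagonal_apply, Prod.ext_iff, and_comm]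

lemma Pm_mul_apply (M : MatT n) (p r : Fin n × Fin n) : (Pm n * M) p r = M (p.2, p.1) r := by
  rw [Pm_eq_toMatrix, PEquiv.toMatrix_toPEquiv_mul]
  rfl

lemma Pm_mul (M : MatT n) : Pm n * M = swap21 M * Pm n := by
  rw [Pm_eq_toMatrix, PEquiv.toMatrix_toPEquiv_mul, PEquiv.mul_toMatrix_toPEquiv]
  rfl

lemma Pm_mul_mul (M N : MatT n) : Pm n * (M * N) = swap21 M * (Pm n * N) := by
  rw [← mul_assoc, Pm_mul, mul_assoc]

lemma Pm_mul_RsQ_sq (q : ℝ) (hq : (q : ℂ) ≠ 0) :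
    (Pm n * RsQ n q) * (Pm n * RsQ n q) = ((q : ℂ) - (q : ℂ)⁻¹) • (Pm n * RsQ n q) + 1 := by
  ext p s
  rw [Matrix.mul_apply]
  simp only [Pm_mul_apply, RsQ_apply, add_mul, ite_mul, zero_mul, Finset.sum_add_distrib,
    Finset.sum_ite_eq', Finset.mem_univ, if_true, ite_and, Finset.sum_ite_irrel,
    Finset.sum_const_zero, Matrix.add_apply, Matrix.smul_apply, Matrix.one_apply, Prod.mk.eta,
    smul_eq_mul]
  split_ifs <;> grind

lemma inv_mul_mul_add_smul_one {A : Type*} [Ring A] [Algebra ℂ A] (u : Aˣ) (x : A) (c : ℂ) :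
    ↑u⁻¹ * x * u + c • 1 = ↑u⁻¹ * (x + c • 1) * u := by
  rw [mul_add, add_mul, mul_smul_one, smul_mul_assoc, Units.inv_mul]

lemma hecke_conj {A : Type*} [Ring A] [Algebra ℂ A] (u : Aˣ) {x : A} {c d : ℂ}
    (h : (x - c • 1) * (x + d • 1) = 0) :
    (↑u⁻¹ * x * u - c • 1) * (↑u⁻¹ * x * u + d • 1) = 0 := by
  rw [sub_eq_add_neg, ← neg_smul, inv_mul_mul_add_smul_one, inv_mul_mul_add_smul_one,
    neg_smul, ← sub_eq_add_neg]
  calc ↑u⁻¹ * (x - c • 1) * ↑u * (↑u⁻¹ * (x + d • 1) * ↑u)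
      = ↑u⁻¹ * ((x - c • 1) * (x + d • 1)) * ↑u := by
        simp only [mul_assoc, Units.mul_inv_cancel_left]
    _ = 0 := by rw [h, mul_zero, zero_mul]

lemma hecke_of_mul_self {A : Type*} [Ring A] [Algebra ℂ A] {x : A} {c : ℂ} (hc : c ≠ 0)
    (h : x * x = (c - c⁻¹) • x + 1) : (x - c • 1) * (x + c⁻¹ • 1) = 0 := by
  have expand : (x - c • 1) * (x + c⁻¹ • 1) = x * x - (c - c⁻¹) • x - (c * c⁻¹) • 1 := by
    simp only [sub_mul, mul_add, smul_mul_assoc, mul_smul_comm, one_mul, mul_one]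
    module
  rw [expand, h, mul_inv_cancel₀ hc, one_smul]
  abel

theorem _root_.Matrix.pow_eq_zero_of_apply_ne_zero_lt {ι R : Type*} [Fintype ι] [DecidableEq ι]
    [Semiring R] {m : ℕ} (b : ι → Fin m) (M : Matrix ι ι R)
    (hM : ∀ i j, M i j ≠ 0 → b i < b j) : M ^ m = 0 := by
  have key : ∀ k i j, (M ^ k) i j ≠ 0 → (b i : ℕ) + k ≤ b j := by
    intro k
    induction k with
    | zero =>
      intro i j h
      rw [pow_zero, Matrix.one_apply] at h
      split_ifs at h with hij
      · rw [hij, add_zero]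
      · exact absurd rfl h
    | succ k ih =>
      intro i j h
      rw [pow_succ, Matrix.mul_apply] at h
      obtain ⟨l, -, hl⟩ := Finset.exists_ne_zero_of_sum_ne_zero h
      have h1 := ih i l (left_ne_zero_of_mul hl)
      have h2 := hM l j (right_ne_zero_of_mul hl)
      rw [Fin.lt_def] at h2
      omega
  ext i j
  by_contra h
  have := key m i j h
  omega

lemma precK_succ_fst_lt_snd (T : BDTriple n) :
    ∀ (k : ℕ) (p r : ℕ × ℕ), precK T (k + 1) p r → r.1 < r.2
  | 0, _, _, ⟨_, hs, rfl⟩ => hs.2.1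
  | k + 1, _, r, ⟨s, _, hsr⟩ => precK_succ_fst_lt_snd T k s r hsr

lemma exists_of_sumRoots_apply_ne_zero {f : ℕ × ℕ → ℕ × ℕ → MatT n} {p r : Fin n × Fin n}
    (h : sumRoots n f p r ≠ 0) : ∃ a b c d, f (a, b) (c, d) p r ≠ 0 := by
  simp only [sumRoots, Matrix.sum_apply] at h
  obtain ⟨a, -, h⟩ := Finset.exists_ne_zero_of_sum_ne_zero h
  obtain ⟨b, -, h⟩ := Finset.exists_ne_zero_of_sum_ne_zero h
  obtain ⟨c, -, h⟩ := Finset.exists_ne_zero_of_sum_ne_zero h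
  obtain ⟨d, -, h⟩ := Finset.exists_ne_zero_of_sum_ne_zero h
  exact ⟨a, b, c, d, h⟩

lemma isUnit_Jlevel_succ (q : ℝ) (T : BDTriple n) (k : ℕ) : IsUnit (Jlevel q T (k + 1)) := by
  refine IsNilpotent.isUnit_one_add ⟨n, Matrix.pow_eq_zero_of_apply_ne_zero_lt Prod.fst _ ?_⟩
  intro p r h
  obtain ⟨a, b, c, d, h⟩ := exists_of_sumRoots_apply_ne_zero h
  split_ifs at h with hk
  · have hcd : c < d := precK_succ_fst_lt_snd T k _ _ hk
    rw [Matrix.smul_apply, tens_E_apply] at h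
    split_ifs at h with hpr
    · rw [Fin.lt_def]; omega
    · simp at h
  · exact absurd rfl h

lemma isUnit_Jmat (q : ℝ) (T : BDTriple n) : IsUnit (Jmat q T) :=
  List.prod_isUnit fun _ hJ => by
    obtain ⟨k, -, rfl⟩ := List.mem_map.mp hJ
    exact isUnit_Jlevel_succ q T k

lemma qr0_eq_diagonal (q : ℝ) (r0 : ℕ → ℕ → ℂ) :
    qr0 n q r0 = Matrix.diagonal fun p => qpow q (r0 p.1 p.2) := by
  ext p r
  simp only [qr0, Matrix.sum_apply, Matrix.smul_apply, tens_E_apply, smul_eq_mul,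
    Matrix.diagonal_apply]
  rw [sum_sum_eq_single p.1 p.2]
  · simp only [Prod.ext_iff, Fin.ext_iff, true_and]
    split_ifs <;> first | ring1 | (exfalso; omega)
  · intro i j hij
    simp only [ne_eq, Prod.mk.injEq, Fin.ext_iff] at hij ⊢
    split_ifs <;> first | ring1 | (exfalso; omega)

lemma swap21_qr0_mul_qr0 (q : ℝ) (r0 : ℕ → ℕ → ℂ) (hanti : Antisym n r0) :
    swap21 (qr0 n q r0) * qr0 n q r0 = 1 := by
  rw [qr0_eq_diagonal, swap21_diagonal, Matrix.diagonal_mul_diagonal, ← Matrix.diagonal_one]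
  congr 1
  ext p
  simp [qpow, hanti p.1 p.1.isLt p.2 p.2.isLt, ← Complex.exp_add]

lemma hecke_twist (q : ℝ) (hq : (q : ℂ) ≠ 0) (J : (MatT n)ˣ) {K : MatT n}
    (hK : swap21 K * K = 1) :
    Hecke q (K * ((J : MatT n)⁻¹ * RsQ n q * swap21 (J : MatT n)) * K) := by
  let Kunit : (MatT n)ˣ := ⟨K, swap21 K, mul_eq_one_comm.mp hK, hK⟩
  let u : (MatT n)ˣ := Units.map (swapAlgEquiv (n := n)).toMonoidHom J * Kunit
  have hconj : Pm n * (K * ((J : MatT n)⁻¹ * RsQ n q * swap21 (J : MatT n)) * K)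
      = ↑u⁻¹ * (Pm n * RsQ n q) * ↑u :=
    calc _ = Pm n * (K * ((J : MatT n)⁻¹ * (RsQ n q * (swap21 (J : MatT n) * K)))) := by
          simp only [mul_assoc]
      _ = swap21 K * (swap21 (J : MatT n)⁻¹ *
            (Pm n * (RsQ n q * (swap21 (J : MatT n) * K)))) := by
          rw [Pm_mul_mul, Pm_mul_mul]
      _ = ↑u⁻¹ * (Pm n * RsQ n q) * ↑u := by
          simp [u, Kunit, Matrix.coe_units_inv, mul_assoc]
  rw [Hecke, hconj]
  exact hecke_conj u (hecke_of_mul_self hq (Pm_mul_RsQ_sq q hq))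

theorem stmt_19_general {n : ℕ} (q : ℝ) (hq : 0 < q)
    (T : BDTriple n) (r0 : ℕ → ℕ → ℂ) (hanti : Antisym n r0) :
    Hecke q (RJ q T r0) := by
  obtain ⟨J, hJ⟩ := isUnit_Jmat q T
  rw [RJ, RbarJ, ← hJ]
  exact hecke_twist q (by exact_mod_cast hq.ne') J (swap21_qr0_mul_qr0 q r0 hanti)

/-- `R_J = q^{r⁰} J⁻¹ R_s J₂₁ q^{r⁰}` satisfies the Hecke relation. -/
theorem stmt_19 {n : ℕ} (hn : 2 ≤ n) (q : ℝ) (hq : 0 < q) (hq1 : q ≠ 1)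
    (T : BDTriple n) (r0 : ℕ → ℕ → ℂ) (hanti : Antisym n r0) :
    Hecke q (RJ q T r0) :=
  stmt_19_general q hq T r0 hanti

end
end GGS
end
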